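/- arXiv:2209.09365 — 3 statements merged into one kernel-verified Lean document; each statement's English description precedes it below -/
import Mathlib

section
/- Assume condition (M) with exponent ν > 0 holds, and let a be a complex number with Λq^m ≠ a for every multi-index m. Then for all multi-indices m > p one has both (|q₁|^{m₁}⋯|q_s|^{m_s})·min(ε_m(a), ε_p(a)) < (2^{ν+1}/|Λ|)·(|m|−|p|)^ν and (|q₁|^{p₁}⋯|q_s|^{p_s})·min(ε_m(a), ε_p(a)) < (2^{ν+1}/|Λ|)·(|m|−|p|)^ν. -/
/-- `ε_m(a) = 1/|Λ q^m − a|`. -/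
noncomputable def eps (s : ℕ) (Λ : ℂ) (q : Fin s → ℂ) (a : ℂ) (m : Fin s → ℕ) : ℝ :=
  1 / ‖Λ * ∏ i, q i ^ m i - a‖

/-!
Put `d = m − p`, `A = Λq^m − a` and `B = Λq^p − a`. Then
`A − B = Λq^p (q^d − 1) = −Λq^m (q^{−d} − 1)`, while `|A − B| ≤ |A| + |B| ≤ 2 max(|A|, |B|)`,
i.e. `min(ε_m, ε_p) |A − B| ≤ 2`. Dividing by `|Λ| |q^d − 1|`, resp. `|Λ| |q^{−d} − 1|`, and
bounding these from below by condition (M) for the multi-index `d` gives the two estimates.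
-/

open Finset

/-- Holds without any nonvanishing assumption, because `1 / ‖0‖ = 0`. -/
theorem min_one_div_norm_mul_norm_sub_le_two {E : Type*} [SeminormedAddCommGroup E] (x y : E) :
    min (1 / ‖x‖) (1 / ‖y‖) * ‖x - y‖ ≤ 2 := by
  have hx : min (1 / ‖x‖) (1 / ‖y‖) * ‖x‖ ≤ 1 := by
    grw [min_le_left, one_div, inv_mul_le_one]
  have hy : min (1 / ‖x‖) (1 / ‖y‖) * ‖y‖ ≤ 1 := by
    grw [min_le_right, one_div, inv_mul_le_one]
  calc min (1 / ‖x‖) (1 / ‖y‖) * ‖x - y‖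
      ≤ min (1 / ‖x‖) (1 / ‖y‖) * (‖x‖ + ‖y‖) := by gcongr; exact norm_sub_le x y
    _ ≤ 2 := by linarith

theorem norm_mul_min_one_div_norm_lt {𝕜 : Type*} [NormedField 𝕜] {x y Λ w r : 𝕜} {e : ℝ}
    (hΛ : Λ ≠ 0) (he : 0 < e) (hr : e < ‖r - 1‖) (hxy : ‖x - y‖ = ‖Λ * w * (r - 1)‖) :
    ‖w‖ * min (1 / ‖x‖) (1 / ‖y‖) < 2 / (‖Λ‖ * e) := by
  set t := min (1 / ‖x‖) (1 / ‖y‖)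
  have hΛe : 0 < ‖Λ‖ * e := by positivity
  have hu : 0 ≤ ‖Λ‖ * ‖w‖ * t := by positivity
  have hbound : ‖Λ‖ * ‖w‖ * t * ‖r - 1‖ ≤ 2 := by
    have := min_one_div_norm_mul_norm_sub_le_two x y
    rw [hxy, norm_mul, norm_mul] at this
    linarith
  rw [lt_div_iff₀ hΛe]
  rcases hu.eq_or_lt with hu0 | hupos
  · nlinarith
  · nlinarith [mul_lt_mul_of_pos_left hr hupos]

section MultiIndex

variable {s : ℕ} (q : Fin s → ℂ) {m p : Fin s → ℕ}

theorem prod_pow_eq_prod_pow_mul_prod_pow_sub (hle : p ≤ m) :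
    ∏ i, q i ^ m i = (∏ i, q i ^ p i) * ∏ i, q i ^ (m - p) i := by
  rw [← prod_mul_distrib]
  refine prod_congr rfl fun i _ => ?_
  rw [← pow_add, Pi.sub_apply, Nat.add_sub_cancel' (hle i)]

theorem prod_zpow_neg_eq_inv (d : Fin s → ℕ) :
    ∏ i, q i ^ (-(d i : ℤ)) = (∏ i, q i ^ d i)⁻¹ := by
  rw [← prod_inv_distrib]
  exact prod_congr rfl fun i _ => by rw [zpow_neg, zpow_natCast]

theorem sum_sub_eq_sub_sum (hle : p ≤ m) :
    ((∑ i, (m - p) i : ℕ) : ℝ) = ((∑ i, m i : ℕ) : ℝ) - ((∑ i, p i : ℕ) : ℝ) := by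
  have hsum : ∑ i, p i ≤ ∑ i, m i := sum_le_sum fun i _ => hle i
  rw [← Nat.cast_sub hsum, ← sum_tsub_distrib _ fun i _ => hle i]
  rfl

end MultiIndex

theorem two_rpow_add_one_div_mul_rpow {L N : ℝ} (ν : ℝ) (hN : 0 < N) :
    (2 : ℝ) ^ (ν + 1) / L * N ^ ν = 2 / (L * ((2 : ℝ) ^ (-ν) * N ^ (-ν))) := by
  rw [Real.rpow_add two_pos, Real.rpow_one, Real.rpow_neg zero_le_two, Real.rpow_neg hN.le]
  have h2 : (0 : ℝ) < 2 ^ ν := Real.rpow_pos_of_pos two_pos ν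
  have hNν : 0 < N ^ ν := Real.rpow_pos_of_pos hN ν
  field_simp

theorem stmt4_general (s : ℕ) (Λ : ℂ) (hΛ : Λ ≠ 0) (q : Fin s → ℂ) (hq : ∀ i, q i ≠ 0)
    (ν : ℝ)
    (hM : ∀ m : Fin s → ℕ, m ≠ 0 →
      ‖∏ i, q i ^ m i - 1‖ > (2 : ℝ) ^ (-ν) * ((∑ i, m i : ℕ) : ℝ) ^ (-ν) ∧
      ‖∏ i, q i ^ (-(m i : ℤ)) - 1‖ > (2 : ℝ) ^ (-ν) * ((∑ i, m i : ℕ) : ℝ) ^ (-ν))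
    (a : ℂ) :
    ∀ m p : Fin s → ℕ, (∀ i, p i ≤ m i) → (∑ i, p i) < (∑ i, m i) →
      (∏ i, ‖q i‖ ^ m i) * min (eps s Λ q a m) (eps s Λ q a p) <
        (2 : ℝ) ^ (ν + 1) / ‖Λ‖ *
          (((∑ i, m i : ℕ) : ℝ) - ((∑ i, p i : ℕ) : ℝ)) ^ ν ∧
      (∏ i, ‖q i‖ ^ p i) * min (eps s Λ q a m) (eps s Λ q a p) <
        (2 : ℝ) ^ (ν + 1) / ‖Λ‖ *
          (((∑ i, m i : ℕ) : ℝ) - ((∑ i, p i : ℕ) : ℝ)) ^ ν := by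
  intro m p hle hlt
  have hN : 0 < ((∑ i, (m - p) i : ℕ) : ℝ) := by
    rw [sum_sub_eq_sub_sum hle]
    exact sub_pos.mpr (Nat.cast_lt.mpr hlt)
  have hd : m - p ≠ 0 := fun h => by rw [h] at hN; simp at hN
  obtain ⟨hMd, hMnegd⟩ := hM (m - p) hd
  have hsplit := prod_pow_eq_prod_pow_mul_prod_pow_sub q hle
  have hqd : ∏ i, q i ^ (m - p) i ≠ 0 := prod_ne_zero_iff.mpr fun i _ => pow_ne_zero _ (hq i)
  rw [prod_zpow_neg_eq_inv] at hMnegd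
  rw [← sum_sub_eq_sub_sum hle, two_rpow_add_one_div_mul_rpow ν hN]
  simp only [← norm_pow, ← norm_prod, eps]
  constructor
  · refine norm_mul_min_one_div_norm_lt hΛ (by positivity) hMnegd ?_
    rw [← norm_neg, hsplit]
    congr 1
    field_simp
    ring
  · refine norm_mul_min_one_div_norm_lt hΛ (by positivity) hMd ?_
    rw [hsplit]
    ring_nf

/-- estimates (22) and (23) in the proof of Lemma 3 of the paper. -/
theorem stmt4 (s : ℕ) (hs : 1 ≤ s) (Λ : ℂ) (hΛ : Λ ≠ 0) (q : Fin s → ℂ) (hq : ∀ i, q i ≠ 0)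
    (ν : ℝ) (hν : 0 < ν)
    (hM : ∀ m : Fin s → ℕ, m ≠ 0 →
      ‖∏ i, q i ^ m i - 1‖ > (2 : ℝ) ^ (-ν) * ((∑ i, m i : ℕ) : ℝ) ^ (-ν) ∧
      ‖∏ i, q i ^ (-(m i : ℤ)) - 1‖ > (2 : ℝ) ^ (-ν) * ((∑ i, m i : ℕ) : ℝ) ^ (-ν))
    (a : ℂ) (hne : ∀ m : Fin s → ℕ, Λ * ∏ i, q i ^ m i ≠ a) :
    ∀ m p : Fin s → ℕ, (∀ i, p i ≤ m i) → (∑ i, p i) < (∑ i, m i) →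
      (∏ i, ‖q i‖ ^ m i) * min (eps s Λ q a m) (eps s Λ q a p) <
        (2 : ℝ) ^ (ν + 1) / ‖Λ‖ *
          (((∑ i, m i : ℕ) : ℝ) - ((∑ i, p i : ℕ) : ℝ)) ^ ν ∧
      (∏ i, ‖q i‖ ^ p i) * min (eps s Λ q a m) (eps s Λ q a p) <
        (2 : ℝ) ^ (ν + 1) / ‖Λ‖ *
          (((∑ i, m i : ℕ) : ℝ) - ((∑ i, p i : ℕ) : ℝ)) ^ ν :=
  stmt4_general s Λ hΛ q hq ν hM a
end

section
/- Let L be a monic complex polynomial of degree n ≥ 1 with L(0) ≠ 0, with roots a₁,…,a_n listed with multiplicity, let ν > 0, and assume that for each root a_j conditions (S1)–(S2) and condition (E) hold with exponent ν. Set ε_m = 1/|L(Λq^m)| (well defined since L(Λq^m) ≠ 0 by (S1)) and N₁ = 2^{2ν+1}. Then for every integer r ≥ 0 and every chain of multi-indices m^(0) > m^(1) > ⋯ > m^(r) with m^(r) nonzero, one has ∏_{i=0}^{r} s^n_{m^(i)}·ε_{m^(i)} < ( N₁^{r+1}·|m^(0)|^ν·∏_{i=1}^{r} (|m^(i−1)|−|m^(i)|)^ν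 )^n. -/
/-- `s_m = max(1, |q₁|^{m₁}⋯|q_s|^{m_s})`. -/
noncomputable def smax (s : ℕ) (q : Fin s → ℂ) (m : Fin s → ℕ) : ℝ :=
  max 1 (∏ i, ‖q i‖ ^ m i)

/-- `ε_m = 1/|L(Λ q^m)|`. -/
noncomputable def epsL (s : ℕ) (Λ : ℂ) (q : Fin s → ℂ) (L : Polynomial ℂ) (m : Fin s → ℕ) : ℝ :=
  1 / ‖Polynomial.eval (Λ * ∏ i, q i ^ m i) L‖

/-!
For one root `a` write `T m = s_m ε_m(a)` and `|m| = m₁ + ⋯ + m_s`, and append the multi-index `0`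
to the chain. Remove from the chain the index `m` with the smallest `ε_m(a)`. Condition (E) for
`m` and each of its neighbours bounds `T m` by `2^{ν+1} d^ν`, where `d` is the corresponding gap
(next to `0`, conditions (S1)–(S2) give even `T m < 2^ν |m|^ν`). Since
`min(d, d') (d + d') ≤ 2 d d'`, this pays for merging the two gaps around `m` into one at the cost
of a factor `2^{2ν+1}`, and induction on the length of the chain gives
`∏ T m⁽ⁱ⁾ < N₁^{r+1} |m⁽ʳ⁾|^ν ∏ (|m⁽ⁱ⁻¹⁾| - |m⁽ⁱ⁾|)^ν`. Multiplying over the `n` roots gives the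
claim, as `ε_m = ∏ⱼ ε_m(aⱼ)`.
-/

namespace List

variable {α β : Type*}

def adjProd [CommMonoid β] (g : α → α → β) : List α → β
  | x :: y :: l => g x y * adjProd g (y :: l)
  | _ => 1

section CommMonoid

variable [CommMonoid β] (g : α → α → β)

@[simp] lemma adjProd_singleton (x : α) : adjProd g [x] = 1 := rfl

@[simp] lemma adjProd_cons_cons (x y : α) (l : List α) :
    adjProd g (x :: y :: l) = g x y * adjProd g (y :: l) := rfl

lemma adjProd_append_cons (l₁ : List α) (x : α) (l₂ : List α) :
    adjProd g (l₁ ++ x :: l₂) = adjProd g (l₁ ++ [x]) * adjProd g (x :: l₂) := by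
  induction l₁ with
  | nil => simp
  | cons a l₁ ih =>
    cases l₁ with
    | nil => simp
    | cons b l₁ =>
      simp only [cons_append, adjProd_cons_cons] at ih ⊢
      rw [ih, mul_assoc]

lemma adjProd_ofFn {n : ℕ} (f : Fin (n + 1) → α) :
    adjProd g (ofFn f) = ∏ i : Fin n, g (f i.castSucc) (f i.succ) := by
  induction n with
  | zero => simp
  | succ n ih =>
    have h := ih (fun i => f i.succ)
    rw [ofFn_succ] at h
    rw [ofFn_succ, ofFn_succ, adjProd_cons_cons, h, Fin.prod_univ_succ]
    rfl

lemma adjProd_ofFn_append_singleton {n : ℕ} (f : Fin (n + 1) → α) (z : α) :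
    adjProd g (ofFn f ++ [z]) =
      (∏ i : Fin n, g (f i.castSucc) (f i.succ)) * g (f (Fin.last n)) z := by
  rw [ofFn_succ' f, concat_eq_append, append_assoc, singleton_append, adjProd_append_cons,
    ← concat_eq_append, ← ofFn_succ', adjProd_ofFn]
  simp

lemma pairwise_ofFn_append_singleton [Preorder α] {n : ℕ} {f : Fin (n + 1) → α} {z : α}
    (hf : StrictAnti f) (hz : z < f (Fin.last n)) : (ofFn f ++ [z]).Pairwise (· > ·) := by
  refine pairwise_append.2 ⟨pairwise_ofFn.2 fun i j hij => hf hij, pairwise_singleton _ _,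
    fun x hx y hy => ?_⟩
  obtain ⟨i, rfl⟩ := mem_ofFn.1 hx
  rw [mem_singleton.1 hy]
  exact hz.trans_le (hf.antitone (Fin.le_last i))

end CommMonoid

section OrderedSemiring

variable [CommSemiring β] [PartialOrder β] [IsStrictOrderedRing β] {g : α → α → β}

lemma adjProd_pos {R : α → α → Prop} (hg : ∀ x y, R x y → 0 < g x y) :
    ∀ {l : List α}, l.Pairwise R → 0 < adjProd g l
  | [], _ | [_], _ => zero_lt_one
  | x :: y :: l, h => by
    rw [pairwise_cons] at h
    exact mul_pos (hg x y (h.1 y mem_cons_self)) (adjProd_pos hg h.2)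

variable {T : α → β} {N : β} {x y : α} {l rest : List α}

lemma prod_map_cons_lt (hN : 0 < N) (hTx : 0 ≤ T x) (hxy : T x < N * g x y)
    (hrest : 0 < adjProd g (y :: rest))
    (hl : (l.map T).prod ≤ N ^ l.length * adjProd g (y :: rest)) :
    ((x :: l).map T).prod < N ^ (x :: l).length * adjProd g (x :: y :: rest) := by
  rw [map_cons, prod_cons, length_cons, adjProd_cons_cons]
  calc T x * (l.map T).prod
      ≤ T x * (N ^ l.length * adjProd g (y :: rest)) := mul_le_mul_of_nonneg_left hl hTx
    _ = N ^ l.length * adjProd g (y :: rest) * T x := by ring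
    _ < N ^ l.length * adjProd g (y :: rest) * (N * g x y) :=
        mul_lt_mul_of_pos_left hxy (by positivity)
    _ = N ^ (l.length + 1) * (g x y * adjProd g (y :: rest)) := by ring

lemma prod_map_append_cons_cons_lt {w : α} {l₁ : List α} (hN : 0 < N) (hTx : 0 ≤ T x)
    (hwxy : T x * g w y < N * (g w x * g x y)) (hhead : 0 < adjProd g (l₁ ++ [w]))
    (hrest : 0 < adjProd g (y :: rest))
    (hl : ((l₁ ++ w :: l).map T).prod ≤
      N ^ (l₁ ++ w :: l).length * adjProd g (l₁ ++ w :: y :: rest)) :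
    ((l₁ ++ w :: x :: l).map T).prod <
      N ^ (l₁ ++ w :: x :: l).length * adjProd g (l₁ ++ w :: x :: y :: rest) := by
  simp only [map_append, map_cons, prod_append, prod_cons, length_append, length_cons] at hl ⊢
  rw [adjProd_append_cons g l₁ w, adjProd_cons_cons] at hl
  rw [adjProd_append_cons g l₁ w, adjProd_cons_cons, adjProd_cons_cons]
  calc (l₁.map T).prod * (T w * (T x * (l.map T).prod))
      = T x * ((l₁.map T).prod * (T w * (l.map T).prod)) := by ring
    _ ≤ T x * (N ^ (l₁.length + (l.length + 1)) *
          (adjProd g (l₁ ++ [w]) * (g w y * adjProd g (y :: rest)))) :=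
        mul_le_mul_of_nonneg_left hl hTx
    _ = N ^ (l₁.length + (l.length + 1)) * adjProd g (l₁ ++ [w]) * adjProd g (y :: rest) *
          (T x * g w y) := by ring
    _ < N ^ (l₁.length + (l.length + 1)) * adjProd g (l₁ ++ [w]) * adjProd g (y :: rest) *
          (N * (g w x * g x y)) := mul_lt_mul_of_pos_left hwxy (by positivity)
    _ = _ := by ring

end OrderedSemiring

end List

lemma mul_add_rpow_lt_of_lt_of_lt {t c u v ν : ℝ} (hν : 0 ≤ ν) (ht : 0 ≤ t) (hu : 0 < u)
    (hv : 0 < v) (htu : t < c * u ^ ν) (htv : t < c * v ^ ν) :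
    t * (u + v) ^ ν < 2 ^ ν * c * (u ^ ν * v ^ ν) := by
  have hc : 0 < c := pos_of_mul_pos_left (ht.trans_lt htu) (by positivity)
  have htmin : t < c * min u v ^ ν := by rcases min_choice u v with h | h <;> rwa [h]
  have hmin : min u v * (u + v) ≤ 2 * (u * v) := by
    rcases le_total u v with h | h
    · rw [min_eq_left h]; nlinarith
    · rw [min_eq_right h]; nlinarith
  calc t * (u + v) ^ ν < c * min u v ^ ν * (u + v) ^ ν :=
        mul_lt_mul_of_pos_right htmin (by positivity)
    _ = c * (min u v * (u + v)) ^ ν := by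
        rw [Real.mul_rpow (le_min hu.le hv.le) (by positivity), mul_assoc]
    _ ≤ c * (2 * (u * v)) ^ ν := by gcongr
    _ = 2 ^ ν * c * (u ^ ν * v ^ ν) := by
        rw [Real.mul_rpow zero_le_two (by positivity), Real.mul_rpow hu.le hv.le]; ring

namespace List

variable {α : Type*} {R : α → α → Prop} {S T e : α → ℝ} {ν c : ℝ} {z : α}

theorem prod_map_lt_pow_mul_adjProd (hν : 0 ≤ ν) (hT : ∀ x, 0 ≤ T x)
    (hS : ∀ x y, R x y → S y < S x)
    (hleft : ∀ x y, R x y → e x ≤ e y → T x < c * (S x - S y) ^ ν)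
    (hright : ∀ x y, R x y → e y ≤ e x → T y < c * (S x - S y) ^ ν)
    (hz : ∀ x, R x z → T x < c * (S x - S z) ^ ν)
    (l : List α) (hl : (l ++ [z]).Pairwise R) (hne : l ≠ []) :
    (l.map T).prod < (2 ^ ν * c) ^ l.length * (l ++ [z]).adjProd (fun x y => (S x - S y) ^ ν) := by
  classical
  set g : α → α → ℝ := fun x y => (S x - S y) ^ ν
  have hg : ∀ x y, R x y → 0 < g x y := fun x y h =>
    Real.rpow_pos_of_pos (sub_pos.2 (hS x y h)) ν
  -- Remove an entry `x` of least `e`, so `hleft`/`hright` bound `T x` by both adjacent gaps.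
  obtain ⟨x, hxl, hxmin⟩ := l.toFinset.exists_min_image e (by simp [hne])
  replace hxmin : ∀ y ∈ l, e x ≤ e y := fun y hy => hxmin y (mem_toFinset.2 hy)
  obtain ⟨l₁, l₂, rfl⟩ := append_of_mem (mem_toFinset.1 hxl)
  have IH : ((l₁ ++ l₂).map T).prod ≤
      (2 ^ ν * c) ^ (l₁ ++ l₂).length * (l₁ ++ l₂ ++ [z]).adjProd g := by
    rcases eq_or_ne (l₁ ++ l₂) [] with h | h
    · simp [h]
    · exact (prod_map_lt_pow_mul_adjProd hν hT hS hleft hright hz _ (hl.sublist (by simp)) h).le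
  obtain ⟨y, rest, hy⟩ := exists_cons_of_ne_nil (by simp : l₂ ++ [z] ≠ [])
  obtain ⟨hl₁, hxl₂, hl₁x⟩ :=
    pairwise_append.1 (by simpa using hl : (l₁ ++ x :: (l₂ ++ [z])).Pairwise R)
  have hxy : R x y := (pairwise_cons.1 hxl₂).1 y (hy ▸ mem_cons_self)
  have hTxy : T x < c * g x y := by
    rcases mem_append.1 (hy ▸ mem_cons_self : y ∈ l₂ ++ [z]) with hyl₂ | hyz
    · exact hleft x y hxy (hxmin y (by simp [hyl₂]))
    · rw [mem_singleton.1 hyz] at hxy ⊢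
      exact hz x hxy
  have hc : 0 < c := pos_of_mul_pos_left ((hT x).trans_lt hTxy) (hg x y hxy).le
  have hrest : 0 < adjProd g (y :: rest) := adjProd_pos hg (hy ▸ (pairwise_cons.1 hxl₂).2)
  rcases eq_nil_or_concat l₁ with rfl | ⟨l₁, w, rfl⟩
  · simp only [nil_append, cons_append, hy] at IH ⊢
    refine prod_map_cons_lt (by positivity) (hT x) ?_ hrest IH
    rw [mul_assoc]
    exact hTxy.trans_le (le_mul_of_one_le_left ((hT x).trans hTxy.le)
      (Real.one_le_rpow one_le_two hν))
  · have hwx : R w x := hl₁x w (by simp) x mem_cons_self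
    have hmerge : T x * g w y < 2 ^ ν * c * (g w x * g x y) := by
      have hsplit : S w - S y = (S w - S x) + (S x - S y) := by ring
      simp only [g, hsplit]
      exact mul_add_rpow_lt_of_lt_of_lt hν (hT x) (sub_pos.2 (hS w x hwx))
        (sub_pos.2 (hS x y hxy)) (hright w x hwx (hxmin w (by simp))) hTxy
    simp only [concat_eq_append, append_assoc, cons_append, hy] at IH ⊢
    exact prod_map_append_cons_cons_lt (by positivity) (hT x) hmerge
      (adjProd_pos hg (by simpa using hl₁)) hrest IH
termination_by l.length
decreasing_by simp_all

end List

lemma Pi.lt_iff_le_and_sum_lt {ι M : Type*} [Fintype ι] [AddCommMonoid M] [LinearOrder M]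
    [IsOrderedCancelAddMonoid M] {p m : ι → M} :
    p < m ↔ (∀ i, p i ≤ m i) ∧ ∑ i, p i < ∑ i, m i := by
  rw [Pi.lt_def]
  refine ⟨fun ⟨hle, i, hi⟩ => ⟨hle, Finset.sum_lt_sum (fun j _ => hle j) ⟨i, by simp, hi⟩⟩,
    fun ⟨hle, hsum⟩ => ⟨hle, ?_⟩⟩
  obtain ⟨i, -, hi⟩ := Finset.exists_lt_of_sum_lt hsum
  exact ⟨i, hi⟩

lemma max_one_norm_div_lt_inv {𝕜 : Type*} [NormedField 𝕜] {Λ a P : 𝕜} {δ : ℝ} (hP : P ≠ 0)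
    (hδ : 0 < δ) (h₁ : δ < ‖Λ * P - a‖) (h₂ : δ < ‖a * P⁻¹ - Λ‖) :
    max 1 ‖P‖ / ‖Λ * P - a‖ < δ⁻¹ := by
  have hP' : 0 < ‖P‖ := norm_pos_iff.2 hP
  have h₂' : δ * ‖P‖ < ‖Λ * P - a‖ := by
    have : a * P⁻¹ - Λ = -((Λ * P - a) * P⁻¹) := by field_simp; ring
    rwa [this, norm_neg, norm_mul, norm_inv, ← div_eq_mul_inv, lt_div_iff₀ hP'] at h₂
  rw [div_lt_iff₀ (hδ.trans h₁), max_lt_iff, lt_inv_mul_iff₀ hδ, lt_inv_mul_iff₀ hδ, mul_one]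
  exact ⟨h₁, h₂'⟩

section

variable {s : ℕ} {Λ a : ℂ} {q : Fin s → ℂ} {ν : ℝ}

lemma cast_sum_pos {m : Fin s → ℕ} (hm : m ≠ 0) : (0 : ℝ) < ((∑ i, m i : ℕ) : ℝ) := by
  exact_mod_cast Nat.pos_of_ne_zero (by simpa [funext_iff] using hm)

lemma smax_pos (m : Fin s → ℕ) : 0 < smax s q m :=
  one_pos.trans_le (le_max_left _ _)

lemma eps_pos {m : Fin s → ℕ} (hm : m ≠ 0)
    (h : ‖Λ * ∏ i, q i ^ m i - a‖ > (2 : ℝ) ^ (-ν) * ((∑ i, m i : ℕ) : ℝ) ^ (-ν)) :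
    0 < eps s Λ q a m :=
  one_div_pos.2 (lt_trans (mul_pos (Real.rpow_pos_of_pos two_pos _)
    (Real.rpow_pos_of_pos (cast_sum_pos hm) _)) h)

lemma smax_mul_eps_lt (hq : ∀ i, q i ≠ 0) {m : Fin s → ℕ} (hm : m ≠ 0)
    (h₁ : ‖Λ * ∏ i, q i ^ m i - a‖ > (2 : ℝ) ^ (-ν) * ((∑ i, m i : ℕ) : ℝ) ^ (-ν))
    (h₂ : ‖a * ∏ i, q i ^ (-(m i : ℤ)) - Λ‖ > (2 : ℝ) ^ (-ν) * ((∑ i, m i : ℕ) : ℝ) ^ (-ν)) :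
    smax s q m * eps s Λ q a m < (2 : ℝ) ^ ν * ((∑ i, m i : ℕ) : ℝ) ^ ν := by
  have hsum := cast_sum_pos hm
  have hinv : ∏ i, q i ^ (-(m i : ℤ)) = (∏ i, q i ^ m i)⁻¹ := by
    simp [zpow_neg, Finset.prod_inv_distrib]
  have := max_one_norm_div_lt_inv (Finset.prod_ne_zero_iff.2 fun i _ => pow_ne_zero _ (hq i))
    (by positivity) h₁ (hinv ▸ h₂)
  rw [mul_inv, Real.rpow_neg zero_le_two, Real.rpow_neg hsum.le, inv_inv, inv_inv] at this
  simpa only [smax, eps, norm_prod, norm_pow, mul_one_div] using this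

theorem prod_map_smax_mul_eps_lt (hq : ∀ i, q i ≠ 0) (hν : 0 ≤ ν)
    (hS1 : ∀ m : Fin s → ℕ, m ≠ 0 →
      ‖Λ * ∏ i, q i ^ m i - a‖ > (2 : ℝ) ^ (-ν) * ((∑ i, m i : ℕ) : ℝ) ^ (-ν))
    (hS2 : ∀ m : Fin s → ℕ, m ≠ 0 →
      ‖a * ∏ i, q i ^ (-(m i : ℤ)) - Λ‖ > (2 : ℝ) ^ (-ν) * ((∑ i, m i : ℕ) : ℝ) ^ (-ν))
    (hE : ∀ m p : Fin s → ℕ, (∀ i, p i ≤ m i) → (∑ i, p i) < (∑ i, m i) →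
      smax s q m * min (eps s Λ q a m) (eps s Λ q a p) <
        (2 : ℝ) ^ (ν + 1) * (((∑ i, m i : ℕ) : ℝ) - ((∑ i, p i : ℕ) : ℝ)) ^ ν ∧
      smax s q p * min (eps s Λ q a m) (eps s Λ q a p) <
        (2 : ℝ) ^ (ν + 1) * (((∑ i, m i : ℕ) : ℝ) - ((∑ i, p i : ℕ) : ℝ)) ^ ν)
    {l : List (Fin s → ℕ)} (hl : (l ++ [0]).Pairwise (· > ·)) (hne : l ≠ []) :
    (l.map fun m => smax s q m * eps s Λ q a m).prod <
      ((2 : ℝ) ^ (2 * ν + 1)) ^ l.length *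
        (l ++ [0]).adjProd fun m p : Fin s → ℕ =>
          (((∑ i, m i : ℕ) : ℝ) - ((∑ i, p i : ℕ) : ℝ)) ^ ν := by
  set S : (Fin s → ℕ) → ℝ := fun m => ((∑ i, m i : ℕ) : ℝ)
  set T : (Fin s → ℕ) → ℝ := fun m => smax s q m * eps s Λ q a m
  have hS : ∀ m p, m > p → S p < S m := fun m p h =>
    Nat.cast_lt.2 (Pi.lt_iff_le_and_sum_lt.1 h).2
  have hleft : ∀ m p, m > p → eps s Λ q a m ≤ eps s Λ q a p →
      T m < 2 ^ (ν + 1) * (S m - S p) ^ ν := fun m p h hmp => by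
    obtain ⟨hle, hsum⟩ := Pi.lt_iff_le_and_sum_lt.1 h
    simpa only [min_eq_left hmp] using (hE m p hle hsum).1
  have hright : ∀ m p, m > p → eps s Λ q a p ≤ eps s Λ q a m →
      T p < 2 ^ (ν + 1) * (S m - S p) ^ ν := fun m p h hpm => by
    obtain ⟨hle, hsum⟩ := Pi.lt_iff_le_and_sum_lt.1 h
    simpa only [min_eq_right hpm] using (hE m p hle hsum).2
  have hzero : ∀ m, m > 0 → T m < 2 ^ (ν + 1) * (S m - S 0) ^ ν := fun m hm => by
    have hm' : m ≠ 0 := hm.ne'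
    calc T m < 2 ^ ν * S m ^ ν := smax_mul_eps_lt hq hm' (hS1 m hm') (hS2 m hm')
      _ ≤ 2 ^ (ν + 1) * (S m - S 0) ^ ν := by
        simp only [S, Pi.zero_apply, Finset.sum_const_zero, Nat.cast_zero, sub_zero]
        gcongr
        · exact one_le_two
        · linarith
  rw [show 2 * ν + 1 = ν + (ν + 1) by ring, Real.rpow_add two_pos]
  exact List.prod_map_lt_pow_mul_adjProd hν
    (fun m => mul_nonneg (smax_pos m).le (one_div_nonneg.2 (norm_nonneg _)))
    hS hleft hright hzero l hl hne

theorem prod_smax_mul_eps_lt (hq : ∀ i, q i ≠ 0) (hν : 0 ≤ ν)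
    (hS1 : ∀ m : Fin s → ℕ, m ≠ 0 →
      ‖Λ * ∏ i, q i ^ m i - a‖ > (2 : ℝ) ^ (-ν) * ((∑ i, m i : ℕ) : ℝ) ^ (-ν))
    (hS2 : ∀ m : Fin s → ℕ, m ≠ 0 →
      ‖a * ∏ i, q i ^ (-(m i : ℤ)) - Λ‖ > (2 : ℝ) ^ (-ν) * ((∑ i, m i : ℕ) : ℝ) ^ (-ν))
    (hE : ∀ m p : Fin s → ℕ, (∀ i, p i ≤ m i) → (∑ i, p i) < (∑ i, m i) →
      smax s q m * min (eps s Λ q a m) (eps s Λ q a p) <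
        (2 : ℝ) ^ (ν + 1) * (((∑ i, m i : ℕ) : ℝ) - ((∑ i, p i : ℕ) : ℝ)) ^ ν ∧
      smax s q p * min (eps s Λ q a m) (eps s Λ q a p) <
        (2 : ℝ) ^ (ν + 1) * (((∑ i, m i : ℕ) : ℝ) - ((∑ i, p i : ℕ) : ℝ)) ^ ν)
    {r : ℕ} (M : Fin (r + 1) → Fin s → ℕ) (hM : StrictAnti M) (hlast : M (Fin.last r) ≠ 0) :
    ∏ i, smax s q (M i) * eps s Λ q a (M i) <
      ((2 : ℝ) ^ (2 * ν + 1)) ^ (r + 1) * ((∑ j, M 0 j : ℕ) : ℝ) ^ ν *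
        ∏ i : Fin r, (((∑ j, M i.castSucc j : ℕ) : ℝ) - ((∑ j, M i.succ j : ℕ) : ℝ)) ^ ν := by
  have key := prod_map_smax_mul_eps_lt hq hν hS1 hS2 hE
    (List.pairwise_ofFn_append_singleton hM (pos_iff_ne_zero.2 hlast)) (by simp)
  rw [List.map_ofFn, List.prod_ofFn, List.length_ofFn, List.adjProd_ofFn_append_singleton] at key
  simp only [Pi.zero_apply, Finset.sum_const_zero, Nat.cast_zero, sub_zero] at key
  refine key.trans_le ?_
  have hsize : ((∑ j, M (Fin.last r) j : ℕ) : ℝ) ≤ ((∑ j, M 0 j : ℕ) : ℝ) :=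
    Nat.cast_le.2 (Finset.sum_le_sum fun i _ => hM.antitone (Fin.zero_le _) i)
  rw [mul_assoc _ (_ ^ ν), mul_comm (_ ^ ν)]
  gcongr
  exact Finset.prod_nonneg fun i _ => Real.rpow_nonneg
    (sub_nonneg.2 (Nat.cast_le.2 (Pi.lt_iff_le_and_sum_lt.1 (hM i.castSucc_lt_succ)).2.le)) ν

end

lemma smax_pow_mul_epsL_eq_prod {s n : ℕ} {Λ : ℂ} {q : Fin s → ℂ} {L : Polynomial ℂ}
    {a : Fin n → ℂ} (hL : L = ∏ j, (Polynomial.X - Polynomial.C (a j))) (m : Fin s → ℕ) :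
    smax s q m ^ n * epsL s Λ q L m = ∏ j, smax s q m * eps s Λ q (a j) m := by
  simp [epsL, eps, hL, Polynomial.eval_prod, Finset.prod_mul_distrib]

theorem stmt8_general (s : ℕ) (Λ : ℂ) (q : Fin s → ℂ) (hq : ∀ i, q i ≠ 0)
    (n : ℕ) (hn : 1 ≤ n) (L : Polynomial ℂ) (a : Fin n → ℂ)
    (hLfact : L = ∏ j, (Polynomial.X - Polynomial.C (a j)))
    (ν : ℝ) (hν : 0 < ν)
    (hS1 : ∀ j : Fin n, ∀ m : Fin s → ℕ, m ≠ 0 →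
      ‖Λ * ∏ i, q i ^ m i - a j‖ > (2 : ℝ) ^ (-ν) * ((∑ i, m i : ℕ) : ℝ) ^ (-ν))
    (hS2 : ∀ j : Fin n, ∀ m : Fin s → ℕ, m ≠ 0 →
      ‖a j * ∏ i, q i ^ (-(m i : ℤ)) - Λ‖
        > (2 : ℝ) ^ (-ν) * ((∑ i, m i : ℕ) : ℝ) ^ (-ν))
    (hE : ∀ j : Fin n, ∀ m p : Fin s → ℕ, (∀ i, p i ≤ m i) → (∑ i, p i) < (∑ i, m i) →
      smax s q m * min (eps s Λ q (a j) m) (eps s Λ q (a j) p) <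
        (2 : ℝ) ^ (ν + 1) * (((∑ i, m i : ℕ) : ℝ) - ((∑ i, p i : ℕ) : ℝ)) ^ ν ∧
      smax s q p * min (eps s Λ q (a j) m) (eps s Λ q (a j) p) <
        (2 : ℝ) ^ (ν + 1) * (((∑ i, m i : ℕ) : ℝ) - ((∑ i, p i : ℕ) : ℝ)) ^ ν)
    (N₁ : ℝ) (hN₁ : N₁ = (2 : ℝ) ^ (2 * ν + 1)) :
    ∀ (r : ℕ) (M : Fin (r + 1) → Fin s → ℕ),
      (∀ i : Fin r, (∀ j, M i.succ j ≤ M i.castSucc j) ∧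
        (∑ j, M i.succ j) < (∑ j, M i.castSucc j)) →
      M (Fin.last r) ≠ 0 →
      ∏ i, smax s q (M i) ^ n * epsL s Λ q L (M i) <
        (N₁ ^ (r + 1) * ((∑ j, M 0 j : ℕ) : ℝ) ^ ν *
          ∏ i : Fin r, (((∑ j, M i.castSucc j : ℕ) : ℝ) - ((∑ j, M i.succ j : ℕ) : ℝ)) ^ ν) ^ n := by
  intro r M hchain hlast
  have hM : StrictAnti M :=
    Fin.strictAnti_iff_succ_lt.2 fun i => Pi.lt_iff_le_and_sum_lt.2 (hchain i)
  have hMne : ∀ i, M i ≠ 0 := fun i =>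
    ((pos_iff_ne_zero.2 hlast).trans_le (hM.antitone (Fin.le_last i))).ne'
  simp_rw [smax_pow_mul_epsL_eq_prod hLfact]
  rw [Finset.prod_comm, hN₁, ← Fin.prod_const n]
  refine Finset.prod_lt_prod_of_nonempty (fun j _ => ?_) (fun j _ => ?_)
    ⟨⟨0, hn⟩, Finset.mem_univ _⟩
  · exact Finset.prod_pos fun i _ => mul_pos (smax_pos _) (eps_pos (hMne i) (hS1 j _ (hMne i)))
  · exact prod_smax_mul_eps_lt hq hν.le (hS1 j) (hS2 j) (hE j) M hM hlast

/-- Corollary 1 of the paper. `L` is a monic polynomial of degree `n ≥ 1`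
with `L(0) ≠ 0`, with roots `a₀, …, a_{n-1}` listed with multiplicity. -/
theorem stmt8 (s : ℕ) (hs : 1 ≤ s) (Λ : ℂ) (hΛ : Λ ≠ 0) (q : Fin s → ℂ) (hq : ∀ i, q i ≠ 0)
    (n : ℕ) (hn : 1 ≤ n) (L : Polynomial ℂ) (a : Fin n → ℂ)
    (hLfact : L = ∏ j, (Polynomial.X - Polynomial.C (a j)))
    (hL0 : Polynomial.eval 0 L ≠ 0)
    (ν : ℝ) (hν : 0 < ν)
    (hS1 : ∀ j : Fin n, ∀ m : Fin s → ℕ, m ≠ 0 →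
      ‖Λ * ∏ i, q i ^ m i - a j‖ > (2 : ℝ) ^ (-ν) * ((∑ i, m i : ℕ) : ℝ) ^ (-ν))
    (hS2 : ∀ j : Fin n, ∀ m : Fin s → ℕ, m ≠ 0 →
      ‖a j * ∏ i, q i ^ (-(m i : ℤ)) - Λ‖
        > (2 : ℝ) ^ (-ν) * ((∑ i, m i : ℕ) : ℝ) ^ (-ν))
    (hE : ∀ j : Fin n, ∀ m p : Fin s → ℕ, (∀ i, p i ≤ m i) → (∑ i, p i) < (∑ i, m i) →
      smax s q m * min (eps s Λ q (a j) m) (eps s Λ q (a j) p) <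
        (2 : ℝ) ^ (ν + 1) * (((∑ i, m i : ℕ) : ℝ) - ((∑ i, p i : ℕ) : ℝ)) ^ ν ∧
      smax s q p * min (eps s Λ q (a j) m) (eps s Λ q (a j) p) <
        (2 : ℝ) ^ (ν + 1) * (((∑ i, m i : ℕ) : ℝ) - ((∑ i, p i : ℕ) : ℝ)) ^ ν)
    (N₁ : ℝ) (hN₁ : N₁ = (2 : ℝ) ^ (2 * ν + 1)) :
    ∀ (r : ℕ) (M : Fin (r + 1) → Fin s → ℕ),
      (∀ i : Fin r, (∀ j, M i.succ j ≤ M i.castSucc j) ∧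
        (∑ j, M i.succ j) < (∑ j, M i.castSucc j)) →
      M (Fin.last r) ≠ 0 →
      ∏ i, smax s q (M i) ^ n * epsL s Λ q L (M i) <
        (N₁ ^ (r + 1) * ((∑ j, M 0 j : ℕ) : ℝ) ^ ν *
          ∏ i : Fin r, (((∑ j, M i.castSucc j : ℕ) : ℝ) - ((∑ j, M i.succ j : ℕ) : ℝ)) ^ ν) ^ n :=
  stmt8_general s Λ q hq n hn L a hLfact ν hν hS1 hS2 hE N₁ hN₁
end

section
/- Let L be a monic complex polynomial of degree n ≥ 1 with L(0) ≠ 0, let ν > 0, and assume that for each root a of L conditions (S1)–(S2) and condition (E) hold with exponent ν. Set ε_m = 1/|L(Λq^m)|, and define δ_m recursively from this ε and n as in the context. Then for every nonzero multi-index m one has s_m^n·δ_m ≤ |m|^{−2νn}·N₂^{|m|−1}·Q^{|m|}, where N₁ = 2^{2ν+1}, N₂ = 8^{νn}·N₁^n, and Q = max(1, |q₁|^n, …, |q_s|^n). -/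
/-!
Unfolding the maximum in its recursive definition, `δ_m` is the weight of a decomposition tree
of `m` whose internal nodes have at least two children. Along such a tree, `s_m^n δ_m` is the
product of `s_v^n ε_v` over the internal nodes `v` and of `s_{e_i}^n ≤ Q` over the `|m|` leaves,
and `s_v^n ε_v = ∏_a s_v ε_v(a)` over the `n` roots `a` of `L`.

Fix a root `a` and put `g(v) = s_v ε_v(a)`. By (S1)–(S2), `g(v) ≤ (2|v|)^ν`, and by (E) two
nested nodes `w < v` cannot both have `g ≥ 2^{ν+1} 2^{νi}` unless `|v| - |w| > 2^i`. A node with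
`g(v) ≥ 2^{ν+1} 2^{νi}` also has `|v| > 2^i`, so a Brjuno-type count bounds the number of such
nodes by `2|m|/2^i`. Summing over the dyadic scales `i` gives
`∏_v g(v) ≤ |m|^{-2ν} 2^{(5ν+1)(|m|-1)}` (for `|m| ≤ 9` the crude bound `g(v) ≤ (2|m|)^ν`
already suffices), and the `n`-th power of this bound is `|m|^{-2νn} N₂^{|m|-1}`.
-/

theorem List.lt_sum_of_mem {M : Type*} [AddCommMonoid M] [PartialOrder M]
    [IsOrderedCancelAddMonoid M] [DecidableEq M] {l : List M} (hl : ∀ x ∈ l, 0 < x)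
    (hlen : 2 ≤ l.length) {a : M} (ha : a ∈ l) : a < l.sum := by
  rw [← List.sum_erase ha, lt_add_iff_pos_right]
  refine List.sum_pos _ (fun x hx => hl x (List.mem_of_mem_erase hx)) ?_
  rw [← List.length_pos_iff, List.length_erase_of_mem ha]
  omega

theorem List.prod_map_pow_eq_pow_sum {α M : Type*} [CommMonoid M] (l : List α) (r : M)
    (k : α → ℕ) : (l.map fun v => r ^ k v).prod = r ^ (l.map k).sum := by
  induction l with
  | nil => simp
  | cons v l ih => simp [ih, pow_add]

theorem List.prod_map_le_pow_length {α R : Type*} [CommMonoidWithZero R] [PartialOrder R]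
    [ZeroLEOneClass R] [PosMulMono R] {l : List α} {f : α → R} {r : R}
    (h0 : ∀ x ∈ l, 0 ≤ f x) (h : ∀ x ∈ l, f x ≤ r) : (l.map f).prod ≤ r ^ l.length :=
  (List.prod_map_le_prod_map₀ f (fun _ => r) h0 h).trans_eq (by simp [List.map_const'])

theorem List.sum_map_card_filter {α β : Type*} (l : List α) (s : Finset β) (p : β → α → Prop)
    [∀ i v, Decidable (p i v)] :
    (l.map fun v => (s.filter (p · v)).card).sum = ∑ i ∈ s, l.countP (p i ·) := by
  induction l with
  | nil => simp
  | cons v l ih =>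
    rw [List.map_cons, List.sum_cons, ih, Finset.card_filter, add_comm]
    simp [List.countP_cons, Finset.sum_add_distrib]

theorem lt_mul_pow_card_filter {c r x : ℝ} (hc : 0 ≤ c) (hr : 1 ≤ r) {L : ℕ}
    (hx : x < c * r ^ L) : x < c * r ^ ((Finset.range L).filter fun i => c * r ^ i ≤ x).card := by
  induction L with
  | zero => simpa using hx
  | succ L ih =>
    by_cases hL : c * r ^ L ≤ x
    · rwa [Finset.filter_true_of_mem fun i hi => (mul_le_mul_of_nonneg_left
        (pow_le_pow_right₀ hr (Nat.lt_succ_iff.1 (Finset.mem_range.1 hi))) hc).trans hL,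
        Finset.card_range]
    · rw [Finset.range_add_one, Finset.filter_insert, if_neg hL]
      exact ih (not_le.1 hL)

theorem Nat.sq_le_two_pow_sub_three {M : ℕ} (hM : 10 ≤ M) : M ^ 2 ≤ 2 ^ (M - 3) := by
  induction M, hM using Nat.le_induction with
  | base => norm_num
  | succ M hM ih =>
    calc (M + 1) ^ 2 ≤ 2 * M ^ 2 := by nlinarith
      _ ≤ 2 * 2 ^ (M - 3) := by omega
      _ = 2 ^ (M + 1 - 3) := by rw [show M + 1 - 3 = M - 3 + 1 by omega, pow_succ, mul_comm]

theorem Real.rpow_le_two_rpow_pow_of_le {a ν : ℝ} (ha : 0 ≤ a) (hν : 0 ≤ ν) {i : ℕ}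
    (hai : a ≤ 2 ^ i) : a ^ ν ≤ ((2 : ℝ) ^ ν) ^ i := by
  rw [Real.rpow_pow_comm (by norm_num)]
  exact Real.rpow_le_rpow ha hai hν

theorem min_mul_lt_of_mul_min_lt {α : Type*} [Mul α] [LinearOrder α] {a b x y c : α}
    (h₁ : a * min x y < c) (h₂ : b * min x y < c) : min (a * x) (b * y) < c := by
  rcases le_total x y with h | h
  · exact (min_le_left _ _).trans_lt (by rwa [min_eq_left h] at h₁)
  · exact (min_le_right _ _).trans_lt (by rwa [min_eq_right h] at h₂)

namespace MultiIndex

variable {ι : Type*} [Fintype ι]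

def deg : (ι → ℕ) →+ ℕ where
  toFun m := ∑ i, m i
  map_zero' := by simp
  map_add' _ _ := Finset.sum_add_distrib

theorem deg_apply (m : ι → ℕ) : deg m = ∑ i, m i := rfl

@[simp] theorem deg_single [DecidableEq ι] (i : ι) : deg (Pi.single i 1) = 1 := by
  simp [deg_apply]

theorem deg_pos_iff {m : ι → ℕ} : 0 < deg m ↔ m ≠ 0 := by
  simp [deg_apply, Function.ne_iff, pos_iff_ne_zero]

theorem deg_mono : Monotone (deg : (ι → ℕ) → ℕ) :=
  fun _ _ h => Finset.sum_le_sum fun i _ => h i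

theorem deg_lt_deg {m p : ι → ℕ} (h : p < m) : deg p < deg m := by
  obtain ⟨hle, i, hi⟩ := Pi.lt_def.1 h
  exact Finset.sum_lt_sum (fun j _ => hle j) ⟨i, Finset.mem_univ i, hi⟩

theorem lt_of_le_of_deg_lt {m p : ι → ℕ} (hle : p ≤ m) (h : deg p < deg m) : p < m :=
  lt_of_le_of_ne hle (by rintro rfl; exact h.false)

theorem exists_eq_single_of_deg_eq_one [DecidableEq ι] {m : ι → ℕ} (h : deg m = 1) :
    ∃ i, m = Pi.single i 1 := by
  obtain ⟨i, hi⟩ : ∃ i, m i ≠ 0 := Function.ne_iff.1 (deg_pos_iff.1 (by omega))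
  have hle : Pi.single i 1 ≤ m := fun j => by
    rcases eq_or_ne j i with rfl | hj
    · simpa [Nat.one_le_iff_ne_zero] using hi
    · simp [hj]
  refine ⟨i, by_contra fun hne => ?_⟩
  simpa [h] using deg_lt_deg (lt_of_le_of_ne hle (Ne.symm hne))

theorem deg_lt_deg_sum {l : List (ι → ℕ)} (hlen : 2 ≤ l.length) (hl : ∀ y ∈ l, y ≠ 0) {y : ι → ℕ}
    (hy : y ∈ l) : deg y < deg l.sum := by
  rw [map_list_sum]
  exact List.lt_sum_of_mem (by simpa [deg_pos_iff] using hl) (by simpa using hlen)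
    (List.mem_map_of_mem hy)

end MultiIndex

open MultiIndex

inductive DecompTree (ι : Type*) where
  | leaf (i : ι)
  | node (children : List (DecompTree ι))

namespace DecompTree

variable {ι : Type*}

@[induction_eliminator]
theorem induction {motive : DecompTree ι → Prop} (leaf : ∀ i, motive (leaf i))
    (node : ∀ l, (∀ c ∈ l, motive c) → motive (node l)) (t : DecompTree ι) : motive t :=
  DecompTree.rec (motive_2 := fun l => ∀ c ∈ l, motive c) leaf node (by simp)
    (fun _ _ hc hl => List.forall_mem_cons.2 ⟨hc, hl⟩) t

instance : Inhabited (DecompTree ι) := ⟨node []⟩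

inductive IsProper : DecompTree ι → Prop
  | leaf (i : ι) : IsProper (leaf i)
  | node {l : List (DecompTree ι)} : 2 ≤ l.length → (∀ c ∈ l, IsProper c) → IsProper (node l)

def leaves : DecompTree ι → List ι
  | leaf i => [i]
  | node l => (l.map leaves).flatten

section Nodes

variable [DecidableEq ι]

def val : DecompTree ι → ι → ℕ
  | leaf i => Pi.single i 1
  | node l => (l.map val).sum

def nodes : DecompTree ι → List (ι → ℕ)
  | leaf _ => []
  | t@(node l) => t.val :: (l.map nodes).flatten

theorem mem_nodes_node {l : List (DecompTree ι)} {v : ι → ℕ} :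
    v ∈ (node l).nodes ↔ v = (node l).val ∨ ∃ c ∈ l, v ∈ c.nodes := by
  simp [nodes, List.mem_flatten, and_comm]

theorem val_le_val_node {l : List (DecompTree ι)} {c : DecompTree ι} (hc : c ∈ l) :
    c.val ≤ (node l).val := by
  simpa only [val] using List.le_sum_of_mem (List.mem_map_of_mem (f := val) hc)

theorem le_val_of_mem_nodes {t : DecompTree ι} {v : ι → ℕ} (hv : v ∈ t.nodes) : v ≤ t.val := by
  induction t with
  | leaf i => simp [nodes] at hv
  | node l ih =>
    obtain rfl | ⟨c, hc, hvc⟩ := mem_nodes_node.1 hv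
    exacts [le_rfl, (ih c hc hvc).trans (val_le_val_node hc)]

variable [Fintype ι]

theorem deg_val_node (l : List (DecompTree ι)) :
    deg (node l).val = (l.map fun c => deg c.val).sum := by
  simp [val, map_list_sum, List.map_map, Function.comp_def]

@[simp] theorem length_leaves (t : DecompTree ι) : t.leaves.length = deg t.val := by
  induction t with
  | leaf i => simp [leaves, val]
  | node l ih =>
    simp only [leaves, List.length_flatten, List.map_map, deg_val_node]
    exact congrArg List.sum (List.map_congr_left ih)

theorem deg_val_pos {t : DecompTree ι} (ht : t.IsProper) : 0 < deg t.val := by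
  induction t with
  | leaf i => simp [val]
  | node l ih =>
    obtain _ | ⟨hlen, hl⟩ := ht
    rw [deg_val_node]
    exact List.sum_pos _ (by simpa using fun c hc => ih c hc (hl c hc))
      (List.ne_nil_of_length_pos (by rw [List.length_map]; omega))

theorem deg_val_lt_deg_val_node {l : List (DecompTree ι)} (ht : (node l).IsProper)
    {c : DecompTree ι} (hc : c ∈ l) : deg c.val < deg (node l).val := by
  obtain _ | ⟨hlen, hl⟩ := ht
  rw [deg_val_node]
  exact List.lt_sum_of_mem (by simpa using fun c hc => deg_val_pos (hl c hc))
    (by simpa using hlen) (List.mem_map_of_mem hc)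

theorem lt_val_of_mem_nodes_child {l : List (DecompTree ι)} (ht : (node l).IsProper)
    {c : DecompTree ι} (hc : c ∈ l) {v : ι → ℕ} (hv : v ∈ c.nodes) : v < (node l).val :=
  have hvc := le_val_of_mem_nodes hv
  lt_of_le_of_deg_lt (hvc.trans (val_le_val_node hc))
    ((deg_mono hvc).trans_lt (deg_val_lt_deg_val_node ht hc))

theorem deg_le_deg_val_of_mem_nodes {t : DecompTree ι} {v : ι → ℕ} (hv : v ∈ t.nodes) :
    deg v ≤ deg t.val :=
  deg_mono (le_val_of_mem_nodes hv)

theorem ne_zero_of_mem_nodes {t : DecompTree ι} (ht : t.IsProper) {v : ι → ℕ}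
    (hv : v ∈ t.nodes) : v ≠ 0 := by
  induction t with
  | leaf i => simp [nodes] at hv
  | node l ih =>
    obtain rfl | ⟨c, hc, hvc⟩ := mem_nodes_node.1 hv
    · exact deg_pos_iff.1 (deg_val_pos ht)
    · obtain _ | ⟨-, hl⟩ := ht
      exact ih c hc (hl c hc) hvc

theorem length_nodes_lt {t : DecompTree ι} (ht : t.IsProper) : t.nodes.length < deg t.val := by
  induction t with
  | leaf i => simp [nodes, val]
  | node l ih =>
    obtain _ | ⟨hlen, hl⟩ := ht
    have key : (l.map fun c => c.nodes.length + 1).sum ≤ (l.map fun c => deg c.val).sum :=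
      List.sum_le_sum fun c hc => ih c hc (hl c hc)
    simp only [List.sum_map_add, List.map_const', List.sum_replicate, smul_eq_mul, mul_one] at key
    simp only [nodes, List.length_cons, List.length_flatten, List.map_map, deg_val_node]
    exact lt_of_lt_of_le (by simpa [Function.comp_def] using by omega) key

end Nodes

section Weight

variable [DecidableEq ι] {R : Type*} [CommMonoid R] (ε σ : (ι → ℕ) → R)

def weight : DecompTree ι → R
  | leaf _ => 1
  | t@(node l) => ε t.val * (l.map fun c => σ c.val * c.weight).prod

theorem mul_weight_eq (t : DecompTree ι) :
    σ t.val * t.weight ε σ =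
      (t.nodes.map fun v => σ v * ε v).prod * (t.leaves.map fun i => σ (Pi.single i 1)).prod := by
  induction t with
  | leaf i => simp [weight, nodes, leaves, val]
  | node l ih =>
    rw [weight, List.map_congr_left ih, List.prod_map_mul]
    simp only [nodes, leaves, List.map_cons, List.prod_cons, List.map_flatten, List.prod_flatten,
      List.map_map, Function.comp_def, mul_assoc]

theorem exists_isProper_weight_eq [Fintype ι] {δ : (ι → ℕ) → R} (hδ₁ : ∀ m, deg m = 1 → δ m = 1)
    (hδ₂ : ∀ m, 1 < deg m → ∃ l : List (ι → ℕ), 2 ≤ l.length ∧ (∀ y ∈ l, y ≠ 0) ∧ l.sum = m ∧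
      δ m = ε m * (l.map fun y => σ y * δ y).prod)
    (m : ι → ℕ) (hm : m ≠ 0) :
    ∃ t : DecompTree ι, t.IsProper ∧ t.val = m ∧ t.weight ε σ = δ m := by
  induction hd : deg m using Nat.strong_induction_on generalizing m with
  | _ d ih =>
  obtain hd1 | hd1 : d = 1 ∨ 1 < d := by have := deg_pos_iff.2 hm; omega
  · obtain ⟨i, rfl⟩ := exists_eq_single_of_deg_eq_one (hd.trans hd1)
    exact ⟨leaf i, .leaf i, by rw [val], by rw [weight, hδ₁ _ (hd.trans hd1)]⟩
  · obtain ⟨l, hlen, hl0, rfl, hδ⟩ := hδ₂ _ (hd ▸ hd1)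
    have hchild : ∀ y ∈ l, ∃ t : DecompTree ι, t.IsProper ∧ t.val = y ∧ t.weight ε σ = δ y :=
      fun y hy => ih _ (hd ▸ deg_lt_deg_sum hlen hl0 hy) y (hl0 y hy) rfl
    choose! T hT using hchild
    have hval : (l.map T).map val = l := by
      rw [List.map_map]
      exact (List.map_congr_left fun y hy => (hT y hy).2.1).trans (List.map_id l)
    refine ⟨node (l.map T), .node (by simpa using hlen) (by simpa using fun y hy => (hT y hy).1),
      by rw [val, hval], ?_⟩
    rw [weight, hδ, val, hval, List.map_map]
    congr 2
    exact List.map_congr_left fun y hy => by simp [(hT y hy).2.1, (hT y hy).2.2]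

end Weight

section Counting

variable [DecidableEq ι] (P : (ι → ℕ) → Prop) [DecidablePred P]

def topNodes : DecompTree ι → List (ι → ℕ)
  | leaf _ => []
  | t@(node l) => if P t.val then [t.val] else (l.map topNodes).flatten

variable {P}

theorem mem_nodes_of_mem_topNodes {t : DecompTree ι} {w : ι → ℕ} (hw : w ∈ t.topNodes P) :
    w ∈ t.nodes ∧ P w := by
  induction t with
  | leaf i => simp [topNodes] at hw
  | node l ih =>
    rw [topNodes] at hw
    split_ifs at hw with hP
    · obtain rfl := List.mem_singleton.1 hw
      exact ⟨mem_nodes_node.2 (.inl rfl), hP⟩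
    · obtain ⟨c, hc, hwc⟩ : ∃ c ∈ l, w ∈ c.topNodes P := by simpa [List.mem_flatten] using hw
      exact ⟨mem_nodes_node.2 (.inr ⟨c, hc, (ih c hc hwc).1⟩), (ih c hc hwc).2⟩

variable [Fintype ι]

theorem sum_deg_topNodes_le (t : DecompTree ι) : ((t.topNodes P).map deg).sum ≤ deg t.val := by
  induction t with
  | leaf i => simp [topNodes]
  | node l ih =>
    rw [topNodes]
    split_ifs
    · simp
    · simpa [List.map_flatten, List.sum_flatten, List.map_map, deg_val_node, Function.comp_def]
        using List.sum_le_sum ih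

theorem sum_deg_flatten_topNodes_le (l : List (DecompTree ι)) :
    (((l.map (topNodes P)).flatten).map deg).sum ≤ deg (node l).val := by
  simpa [List.map_flatten, List.sum_flatten, List.map_map, deg_val_node, Function.comp_def]
    using List.sum_le_sum fun c (_ : c ∈ l) => sum_deg_topNodes_le (P := P) c

theorem mem_flatten_topNodes {l : List (DecompTree ι)} (ht : (node l).IsProper) {w : ι → ℕ}
    (hw : w ∈ (l.map (topNodes P)).flatten) : w ∈ (node l).nodes ∧ P w ∧ w < (node l).val := by
  obtain ⟨c, hc, hwc⟩ : ∃ c ∈ l, w ∈ c.topNodes P := by simpa [List.mem_flatten] using hw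
  obtain ⟨hwn, hPw⟩ := mem_nodes_of_mem_topNodes hwc
  exact ⟨mem_nodes_node.2 (.inr ⟨c, hc, hwn⟩), hPw, lt_val_of_mem_nodes_child ht hc hwn⟩

/-- Brjuno's counting lemma in the form of an invariant: at a `P`-node whose subtree has a single
topmost `P`-node `w` below it, the gap `deg w + G ≤ deg v` pays for the new node. -/
theorem mul_countP_add_mul_length_topNodes_le {G : ℕ} {t : DecompTree ι} (ht : t.IsProper)
    (hG : ∀ v ∈ t.nodes, P v → G ≤ deg v)
    (hgap : ∀ v ∈ t.nodes, ∀ w ∈ t.nodes, P v → P w → w < v → deg w + G ≤ deg v) :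
    G * t.nodes.countP (P ·) + G * (t.topNodes P).length ≤ 2 * ((t.topNodes P).map deg).sum := by
  induction t with
  | leaf i => simp [nodes, topNodes]
  | node l ih =>
    obtain _ | ⟨hlen, hl⟩ := ht
    have hIH : G * (l.map fun c => c.nodes.countP (P ·)).sum +
        G * ((l.map (topNodes P)).flatten).length ≤
          2 * (((l.map (topNodes P)).flatten).map deg).sum := by
      have := List.sum_le_sum fun c hc => ih c hc (hl c hc)
        (fun v hv => hG v (mem_nodes_node.2 (.inr ⟨c, hc, hv⟩)))
        (fun v hv w hw => hgap v (mem_nodes_node.2 (.inr ⟨c, hc, hv⟩)) w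
          (mem_nodes_node.2 (.inr ⟨c, hc, hw⟩)))
      simpa [List.sum_map_add, List.sum_map_mul_left, List.length_flatten, List.map_flatten,
        List.sum_flatten, List.map_map, Function.comp_def] using this
    have hT := sum_deg_flatten_topNodes_le (P := P) l
    have hmem : ∀ w ∈ (l.map (topNodes P)).flatten, w ∈ (node l).nodes ∧ P w ∧ w < (node l).val :=
      fun w hw => mem_flatten_topNodes (.node hlen hl) hw
    rw [nodes, topNodes, List.countP_cons, List.countP_flatten, List.map_map, Function.comp_def]
    generalize (l.map fun c => c.nodes.countP (P ·)).sum = K at hIH ⊢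
    by_cases hP : P (node l).val
    · have hGV := hG _ (mem_nodes_node.2 (.inl rfl)) hP
      simp only [hP, decide_true, if_true, List.length_singleton, List.map_singleton,
        List.sum_singleton]
      generalize (l.map (topNodes P)).flatten = T at hIH hT hmem
      rcases T with _ | ⟨w, _ | ⟨w', T⟩⟩
      · obtain rfl | rfl : G = 0 ∨ K = 0 := by simpa using hIH
        all_goals linarith
      · obtain ⟨hwn, hPw, hwV⟩ := hmem w (List.mem_singleton_self w)
        have := hgap _ (mem_nodes_node.2 (.inl rfl)) w hwn hP hPw hwV
        simp only [List.length_singleton, mul_one, List.map_singleton, List.sum_singleton] at hIH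
        nlinarith
      · simp only [List.length_cons, List.map_cons, List.sum_cons] at hIH hT
        nlinarith
    · simpa [hP] using hIH

theorem mul_countP_nodes_le {G : ℕ} {t : DecompTree ι} (ht : t.IsProper)
    (hG : ∀ v ∈ t.nodes, P v → G ≤ deg v)
    (hgap : ∀ v ∈ t.nodes, ∀ w ∈ t.nodes, P v → P w → w < v → deg w + G ≤ deg v) :
    G * t.nodes.countP (P ·) ≤ 2 * deg t.val :=
  calc G * t.nodes.countP (P ·)
      ≤ G * t.nodes.countP (P ·) + G * (t.topNodes P).length := Nat.le_add_right _ _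
    _ ≤ 2 * ((t.topNodes P).map deg).sum := mul_countP_add_mul_length_topNodes_le ht hG hgap
    _ ≤ 2 * deg t.val := by gcongr; exact sum_deg_topNodes_le t

end Counting

section Scales

variable [DecidableEq ι] [Fintype ι] {ν : ℝ} {g : (ι → ℕ) → ℝ} {t : DecompTree ι}

/-- Scale `i` consists of the nodes with `g v ≥ 2^{ν+1} 2^{νi}`; by the two hypotheses these have
`deg v > 2^i`, and nested ones differ in degree by more than `2^i`. -/
theorem mul_countP_nodes_scale_le (ht : t.IsProper) (hν : 0 < ν)
    (hcap : ∀ v ∈ t.nodes, g v ≤ 2 ^ ν * (deg v : ℝ) ^ ν)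
    (hgap : ∀ v ∈ t.nodes, ∀ w ∈ t.nodes, w < v →
      min (g v) (g w) < 2 ^ (ν + 1) * ((deg v : ℝ) - deg w) ^ ν) (i : ℕ) :
    (2 ^ i + 1) * t.nodes.countP (fun v => 2 * 2 ^ ν * ((2 : ℝ) ^ ν) ^ i ≤ g v) ≤
      2 * deg t.val := by
  have hx : (0 : ℝ) < 2 ^ ν * ((2 : ℝ) ^ ν) ^ i := by positivity
  refine mul_countP_nodes_le ht (fun v hv hPv => ?_) (fun v hv w hw hPv hPw hwv => ?_)
  · by_contra! hvi
    have := (hcap v hv).trans (mul_le_mul_of_nonneg_left (Real.rpow_le_two_rpow_pow_of_le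
      (Nat.cast_nonneg _) hν.le (by exact_mod_cast Nat.lt_succ_iff.1 hvi)) (by positivity))
    linarith
  · by_contra! hvw
    have hle : ((deg v : ℝ) - deg w) ^ ν ≤ ((2 : ℝ) ^ ν) ^ i := by
      refine Real.rpow_le_two_rpow_pow_of_le ?_ hν.le ?_
      · have := deg_lt_deg hwv
        rw [sub_nonneg]; exact_mod_cast this.le
      · have := deg_lt_deg hwv
        rw [sub_le_iff_le_add]; exact_mod_cast (by omega : deg v ≤ 2 ^ i + deg w)
    have := (hgap v hv w hw hwv).trans_le (mul_le_mul_of_nonneg_left hle (by positivity))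
    rw [Real.rpow_add_one (by norm_num)] at this
    have := le_min hPv hPw
    linarith

theorem sq_rpow_mul_prod_map_nodes_le_of_deg_le_nine (ht : t.IsProper) (hν : 0 < ν)
    (hg0 : ∀ v ∈ t.nodes, 0 ≤ g v) (hcap : ∀ v ∈ t.nodes, g v ≤ 2 ^ ν * (deg v : ℝ) ^ ν)
    (hM : deg t.val ≤ 9) :
    ((deg t.val : ℝ) ^ ν) ^ 2 * (t.nodes.map g).prod ≤
      (2 * ((2 : ℝ) ^ ν) ^ 5) ^ (deg t.val - 1) := by
  obtain ⟨K, hK⟩ : ∃ K, deg t.val = K + 1 := ⟨deg t.val - 1, by have := deg_val_pos ht; omega⟩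
  set x : ℝ := 2 ^ ν
  set y : ℝ := (deg t.val : ℝ) ^ ν
  have hx : 1 ≤ x := Real.one_le_rpow (by norm_num) hν.le
  have hy : 1 ≤ y := Real.one_le_rpow (by exact_mod_cast deg_val_pos ht) hν.le
  have hprod : (t.nodes.map g).prod ≤ (x * y) ^ K :=
    calc (t.nodes.map g).prod ≤ (x * y) ^ t.nodes.length :=
          List.prod_map_le_pow_length hg0 fun v hv => (hcap v hv).trans <|
            mul_le_mul_of_nonneg_left (Real.rpow_le_rpow (Nat.cast_nonneg _)
              (by exact_mod_cast deg_le_deg_val_of_mem_nodes hv) hν.le) (by positivity)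
      _ ≤ (x * y) ^ K := pow_le_pow_right₀ (one_le_mul_of_one_le_of_one_le hx hy)
          (by have := length_nodes_lt ht; omega)
  have hyK : y ^ (K + 2) ≤ x ^ (4 * K) := by
    rw [Real.rpow_pow_comm (Nat.cast_nonneg _)]
    refine Real.rpow_le_two_rpow_pow_of_le (by positivity) hν.le ?_
    rw [hK]
    have : K ≤ 8 := by omega
    exact_mod_cast (by interval_cases K <;> norm_num : (K + 1) ^ (K + 2) ≤ 2 ^ (4 * K))
  rw [hK, Nat.add_sub_cancel]
  calc y ^ 2 * (t.nodes.map g).prod ≤ y ^ 2 * (x * y) ^ K := by gcongr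
    _ = x ^ K * y ^ (K + 2) := by ring
    _ ≤ x ^ K * x ^ (4 * K) := by gcongr
    _ ≤ 2 ^ K * x ^ (5 * K) := by
        rw [← pow_add, show K + 4 * K = 5 * K by ring]
        exact le_mul_of_one_le_left (by positivity) (one_le_pow₀ (by norm_num))
    _ = (2 * x ^ 5) ^ K := by ring

theorem prod_map_nodes_le_pow_mul_pow_sum_countP (hν : 0 < ν)
    (hg0 : ∀ v ∈ t.nodes, 0 ≤ g v) (hcap : ∀ v ∈ t.nodes, g v ≤ 2 ^ ν * (deg v : ℝ) ^ ν) :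
    (t.nodes.map g).prod ≤ (2 * 2 ^ ν) ^ t.nodes.length * ((2 : ℝ) ^ ν) ^
      ∑ i ∈ Finset.range (deg t.val),
        t.nodes.countP (fun v => 2 * 2 ^ ν * ((2 : ℝ) ^ ν) ^ i ≤ g v) := by
  set x : ℝ := 2 ^ ν
  have hx : 1 ≤ x := Real.one_le_rpow (by norm_num) hν.le
  have hgM : ∀ v ∈ t.nodes, g v < 2 * x * x ^ deg t.val := fun v hv => by
    have : (deg v : ℝ) ^ ν ≤ x ^ deg t.val :=
      Real.rpow_le_two_rpow_pow_of_le (Nat.cast_nonneg _) hν.le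
        (by exact_mod_cast (deg_le_deg_val_of_mem_nodes hv).trans Nat.lt_two_pow_self.le)
    have := (hcap v hv).trans (mul_le_mul_of_nonneg_left this (by positivity))
    nlinarith [pow_pos (by positivity : 0 < x) (deg t.val)]
  calc (t.nodes.map g).prod
      ≤ (t.nodes.map fun v => 2 * x * x ^ ((Finset.range (deg t.val)).filter
          fun i => 2 * x * x ^ i ≤ g v).card).prod :=
        List.prod_map_le_prod_map₀ _ _ hg0 fun v hv =>
          (lt_mul_pow_card_filter (by positivity) hx (hgM v hv)).le
    _ = _ := by
      rw [List.prod_map_mul, List.map_const', List.prod_replicate, List.prod_map_pow_eq_pow_sum,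
        List.sum_map_card_filter]

theorem sum_countP_nodes_scale_le (ht : t.IsProper) (hν : 0 < ν)
    (hcap : ∀ v ∈ t.nodes, g v ≤ 2 ^ ν * (deg v : ℝ) ^ ν)
    (hgap : ∀ v ∈ t.nodes, ∀ w ∈ t.nodes, w < v →
      min (g v) (g w) < 2 ^ (ν + 1) * ((deg v : ℝ) - deg w) ^ ν) :
    ∑ i ∈ Finset.range (deg t.val), t.nodes.countP (fun v => 2 * 2 ^ ν * ((2 : ℝ) ^ ν) ^ i ≤ g v)
      ≤ t.nodes.length + 2 * deg t.val := by
  set M := deg t.val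
  set C : ℕ → ℕ := fun i => t.nodes.countP (fun v => 2 * 2 ^ ν * ((2 : ℝ) ^ ν) ^ i ≤ g v)
  have hCi : ∀ i, (C (i + 1) : ℝ) ≤ M * (1 / 2) ^ i := fun i => by
    have h2 : ((2 ^ (i + 1) * C (i + 1) : ℕ) : ℝ) ≤ 2 * M := by
      exact_mod_cast (Nat.mul_le_mul_right _ (Nat.le_succ _)).trans
        (mul_countP_nodes_scale_le ht hν hcap hgap (i + 1))
    push_cast at h2
    rw [pow_succ] at h2
    rw [one_div_pow, ← div_eq_mul_one_div, le_div_iff₀ (by positivity)]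
    linarith
  have hsum : (∑ i ∈ Finset.range (M - 1), C (i + 1) : ℝ) ≤ 2 * M :=
    calc (∑ i ∈ Finset.range (M - 1), C (i + 1) : ℝ)
        ≤ ∑ i ∈ Finset.range (M - 1), M * (1 / 2 : ℝ) ^ i := Finset.sum_le_sum fun i _ => hCi i
      _ ≤ M * 2 := by rw [← Finset.mul_sum]; gcongr; exact sum_geometric_two_le _
      _ = 2 * M := by ring
  have hsum' : ∑ i ∈ Finset.range (M - 1), C (i + 1) ≤ 2 * M := by exact_mod_cast hsum
  have hC0 : C 0 ≤ t.nodes.length := List.countP_le_length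
  have hsplit : ∑ i ∈ Finset.range M, C i = ∑ i ∈ Finset.range (M - 1), C (i + 1) + C 0 := by
    rw [← Finset.sum_range_succ', Nat.sub_add_cancel (deg_val_pos ht)]
  change ∑ i ∈ Finset.range M, C i ≤ _
  omega

theorem sq_rpow_mul_prod_map_nodes_le_of_ten_le_deg (ht : t.IsProper) (hν : 0 < ν)
    (hg0 : ∀ v ∈ t.nodes, 0 ≤ g v) (hcap : ∀ v ∈ t.nodes, g v ≤ 2 ^ ν * (deg v : ℝ) ^ ν)
    (hgap : ∀ v ∈ t.nodes, ∀ w ∈ t.nodes, w < v →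
      min (g v) (g w) < 2 ^ (ν + 1) * ((deg v : ℝ) - deg w) ^ ν)
    (hM : 10 ≤ deg t.val) :
    ((deg t.val : ℝ) ^ ν) ^ 2 * (t.nodes.map g).prod ≤
      (2 * ((2 : ℝ) ^ ν) ^ 5) ^ (deg t.val - 1) := by
  have hprod := prod_map_nodes_le_pow_mul_pow_sum_countP hν hg0 hcap
  have hsum := sum_countP_nodes_scale_le ht hν hcap hgap
  have hlen := length_nodes_lt ht
  set M := deg t.val
  set x : ℝ := 2 ^ ν
  have hx : 1 ≤ x := Real.one_le_rpow (by norm_num) hν.le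
  obtain ⟨K, hK⟩ : ∃ K, M = K + 3 := ⟨M - 3, by omega⟩
  have hy : ((M : ℝ) ^ ν) ^ 2 ≤ x ^ K := by
    rw [Real.rpow_pow_comm (Nat.cast_nonneg _)]
    refine Real.rpow_le_two_rpow_pow_of_le (by positivity) hν.le ?_
    have : M ^ 2 ≤ 2 ^ K := by simpa [hK] using Nat.sq_le_two_pow_sub_three hM
    exact_mod_cast this
  calc ((M : ℝ) ^ ν) ^ 2 * (t.nodes.map g).prod
      ≤ x ^ K * ((2 * x) ^ (K + 2) * x ^ ((K + 2) + 2 * (K + 3))) := by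
        refine mul_le_mul hy (hprod.trans (mul_le_mul (pow_le_pow_right₀ (by linarith) (by omega))
          (pow_le_pow_right₀ hx (by omega)) (by positivity) (by positivity)))
          (List.prod_nonneg ?_) (by positivity)
        simpa using hg0
    _ = (2 * x ^ 5) ^ (M - 1) := by rw [hK, show K + 3 - 1 = K + 2 by omega]; ring

theorem prod_map_nodes_le (ht : t.IsProper) (hν : 0 < ν)
    (hg0 : ∀ v ∈ t.nodes, 0 ≤ g v) (hcap : ∀ v ∈ t.nodes, g v ≤ 2 ^ ν * (deg v : ℝ) ^ ν)
    (hgap : ∀ v ∈ t.nodes, ∀ w ∈ t.nodes, w < v →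
      min (g v) (g w) < 2 ^ (ν + 1) * ((deg v : ℝ) - deg w) ^ ν) :
    (t.nodes.map g).prod ≤ (deg t.val : ℝ) ^ (-(2 * ν)) * (2 ^ (5 * ν + 1)) ^ (deg t.val - 1) := by
  have h5 : (2 : ℝ) ^ (5 * ν + 1) = 2 * ((2 : ℝ) ^ ν) ^ 5 := by
    rw [Real.rpow_add_one two_ne_zero, mul_comm 5 ν, Real.rpow_mul zero_le_two, mul_comm]
    norm_cast
  have hM : (deg t.val : ℝ) ^ (-(2 * ν)) = (((deg t.val : ℝ) ^ ν) ^ 2)⁻¹ := by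
    rw [Real.rpow_neg (Nat.cast_nonneg _), mul_comm, Real.rpow_mul (Nat.cast_nonneg _)]
    norm_cast
  rw [h5, hM, le_inv_mul_iff₀ (by have := deg_val_pos ht; positivity)]
  rcases le_or_gt (deg t.val) 9 with h | h
  · exact sq_rpow_mul_prod_map_nodes_le_of_deg_le_nine ht hν hg0 hcap h
  · exact sq_rpow_mul_prod_map_nodes_le_of_ten_le_deg ht hν hg0 hcap hgap h

end Scales

end DecompTree

theorem one_le_smax {s : ℕ} (q : Fin s → ℂ) (m : Fin s → ℕ) : 1 ≤ smax s q m := le_max_left _ _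

theorem smax_mul_eps_nonneg {s : ℕ} (Λ : ℂ) (q : Fin s → ℂ) (a : ℂ) (m : Fin s → ℕ) :
    0 ≤ smax s q m * eps s Λ q a m :=
  mul_nonneg (zero_le_one.trans (one_le_smax q m)) (by unfold eps; positivity)

theorem smax_single {s : ℕ} (q : Fin s → ℂ) (i : Fin s) :
    smax s q (Pi.single i 1) = max 1 ‖q i‖ := by
  simp [smax, Pi.single_apply]

theorem smax_mul_eps_le_inv {s : ℕ} {Λ a : ℂ} {q : Fin s → ℂ} (hq : ∀ i, q i ≠ 0)
    {m : Fin s → ℕ} {B : ℝ} (hB : 0 < B) (h₁ : B < ‖Λ * ∏ i, q i ^ m i - a‖)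
    (h₂ : B < ‖a * ∏ i, q i ^ (-(m i : ℤ)) - Λ‖) : smax s q m * eps s Λ q a m ≤ B⁻¹ := by
  set X := ∏ i, q i ^ m i
  have hX : X ≠ 0 := Finset.prod_ne_zero_iff.2 fun i _ => pow_ne_zero _ (hq i)
  have hXinv : ∏ i, q i ^ (-(m i : ℤ)) = X⁻¹ := by simp [X, zpow_neg, Finset.prod_inv_distrib]
  rw [hXinv, norm_sub_rev, ← mul_div_cancel_right₀ Λ hX, ← div_eq_mul_inv, ← sub_div,
    norm_div] at h₂
  have hA : 0 < ‖Λ * X - a‖ := hB.trans h₁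
  have hnX : ∏ i, ‖q i‖ ^ m i = ‖X‖ := by simp [X, norm_prod]
  simp only [smax, eps, hnX]
  rw [max_mul_of_nonneg (1 : ℝ) ‖X‖ (one_div_pos.2 hA).le]
  refine max_le ?_ ?_
  · rw [one_mul, one_div]
    exact inv_anti₀ hB h₁.le
  · rw [mul_one_div, ← inv_div]
    exact inv_anti₀ hB h₂.le

theorem norm_eval_inv_mul_pow_eq_prod_roots {L : Polynomial ℂ} (hL : L.Monic) (x : ℂ) (r : ℝ) :
    r ^ L.natDegree * (1 / ‖L.eval x‖) = (L.roots.map fun a => r * (1 / ‖x - a‖)).prod := by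
  rw [Multiset.prod_map_mul, Multiset.map_const', Multiset.prod_replicate,
    IsAlgClosed.card_roots_eq_natDegree, (IsAlgClosed.splits L).eval_eq_prod_roots_of_monic hL]
  have := map_multiset_prod (normHom : ℂ →*₀ ℝ) (L.roots.map (x - ·))
  simp_all [Multiset.map_map, Multiset.prod_map_inv]

theorem max_one_norm_pow_le_max' {s : ℕ} (q : Fin s → ℂ) (n : ℕ) (i : Fin s) :
    max 1 ‖q i‖ ^ n ≤ (insert (1 : ℝ) (Finset.image (fun i => ‖q i‖ ^ n) Finset.univ)).max'
      (Finset.insert_nonempty _ _) := by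
  rcases le_total ‖q i‖ 1 with h | h
  · rw [max_eq_left h, one_pow]
    exact Finset.le_max' _ _ (by simp)
  · rw [max_eq_right h]
    exact Finset.le_max' _ _ (by simp)

theorem eight_rpow_mul_mul_two_rpow_pow (ν : ℝ) (n : ℕ) :
    (8 : ℝ) ^ (ν * n) * ((2 : ℝ) ^ (2 * ν + 1)) ^ n = ((2 : ℝ) ^ (5 * ν + 1)) ^ n := by
  rw [Real.rpow_mul_natCast (by norm_num), ← mul_pow, show (8 : ℝ) = 2 ^ (3 : ℝ) by norm_num,
    ← Real.rpow_mul zero_le_two, ← Real.rpow_add two_pos]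
  ring_nf

namespace DecompTree

variable {s : ℕ} {Λ : ℂ} {q : Fin s → ℂ} {t : DecompTree (Fin s)}

theorem prod_map_nodes_smax_mul_eps_le (hq : ∀ i, q i ≠ 0) {ν : ℝ} (hν : 0 < ν) {a : ℂ}
    (hS1 : ∀ m : Fin s → ℕ, m ≠ 0 →
      ‖Λ * ∏ i, q i ^ m i - a‖ > (2 : ℝ) ^ (-ν) * ((∑ i, m i : ℕ) : ℝ) ^ (-ν))
    (hS2 : ∀ m : Fin s → ℕ, m ≠ 0 →
      ‖a * ∏ i, q i ^ (-(m i : ℤ)) - Λ‖ > (2 : ℝ) ^ (-ν) * ((∑ i, m i : ℕ) : ℝ) ^ (-ν))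
    (hE : ∀ m p : Fin s → ℕ, (∀ i, p i ≤ m i) → (∑ i, p i) < (∑ i, m i) →
      smax s q m * min (eps s Λ q a m) (eps s Λ q a p) <
        (2 : ℝ) ^ (ν + 1) * (((∑ i, m i : ℕ) : ℝ) - ((∑ i, p i : ℕ) : ℝ)) ^ ν ∧
      smax s q p * min (eps s Λ q a m) (eps s Λ q a p) <
        (2 : ℝ) ^ (ν + 1) * (((∑ i, m i : ℕ) : ℝ) - ((∑ i, p i : ℕ) : ℝ)) ^ ν)
    (ht : t.IsProper) :
    (t.nodes.map fun v => smax s q v * eps s Λ q a v).prod ≤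
      (deg t.val : ℝ) ^ (-(2 * ν)) * (2 ^ (5 * ν + 1)) ^ (deg t.val - 1) := by
  refine prod_map_nodes_le ht hν (fun v _ => smax_mul_eps_nonneg Λ q a v) (fun v hv => ?_)
    fun v _ w _ hwv => min_mul_lt_of_mul_min_lt (hE v w hwv.le (deg_lt_deg hwv)).1
      (hE v w hwv.le (deg_lt_deg hwv)).2
  have hv0 := ne_zero_of_mem_nodes ht hv
  have hpos : (0 : ℝ) < ((∑ i, v i : ℕ) : ℝ) := by exact_mod_cast deg_pos_iff.2 hv0
  have := smax_mul_eps_le_inv hq (by positivity) (hS1 v hv0) (hS2 v hv0)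
  rwa [mul_inv, ← Real.rpow_neg zero_le_two, ← Real.rpow_neg hpos.le, neg_neg] at this

theorem smax_pow_mul_weight_le {L : Polynomial ℂ} (hL : L.Monic) {ε : (Fin s → ℕ) → ℝ}
    (hε : ∀ m, ε m = 1 / ‖L.eval (Λ * ∏ i, q i ^ m i)‖) {B Q : ℝ}
    (hroot : ∀ a ∈ L.roots, (t.nodes.map fun v => smax s q v * eps s Λ q a v).prod ≤ B)
    (hQ₀ : 0 ≤ Q) (hQ : ∀ i, max 1 ‖q i‖ ^ L.natDegree ≤ Q) :
    smax s q t.val ^ L.natDegree * t.weight ε (smax s q · ^ L.natDegree) ≤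
      B ^ L.natDegree * Q ^ deg t.val := by
  have hnodes : (t.nodes.map fun v => smax s q v ^ L.natDegree * ε v) =
      t.nodes.map fun v => (L.roots.map fun a => smax s q v * eps s Λ q a v).prod :=
    List.map_congr_left fun v _ => by rw [hε, norm_eval_inv_mul_pow_eq_prod_roots hL]; rfl
  rw [mul_weight_eq ε (smax s q · ^ L.natDegree) t, hnodes]
  refine mul_le_mul_of_nonneg ?_ ?_ (List.prod_nonneg ?_) (pow_nonneg hQ₀ _)
  · rw [← Multiset.prod_coe, ← Multiset.map_coe, Multiset.prod_map_prod_map,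
      ← IsAlgClosed.card_roots_eq_natDegree, ← Multiset.prod_replicate, ← Multiset.map_const']
    refine Multiset.prod_map_le_prod_map₀ _ _ (fun a _ => ?_) fun a ha => ?_ <;>
      rw [Multiset.map_coe, Multiset.prod_coe]
    · exact List.prod_nonneg (by simpa using fun v _ => smax_mul_eps_nonneg Λ q a v)
    · exact hroot a ha
  · rw [← length_leaves]
    exact List.prod_map_le_pow_length (fun i _ => pow_nonneg (zero_le_one.trans
      (one_le_smax q _)) _) fun i _ => by rw [smax_single]; exact hQ i
  · simp only [List.mem_map]
    rintro _ ⟨v, -, rfl⟩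
    exact Multiset.prod_nonneg fun x hx => by
      obtain ⟨a, -, rfl⟩ := Multiset.mem_map.1 hx
      exact smax_mul_eps_nonneg Λ q a v

end DecompTree

theorem stmt10_general (s : ℕ) (Λ : ℂ) (q : Fin s → ℂ) (hq : ∀ i, q i ≠ 0)
    (L : Polynomial ℂ) (n : ℕ) (hmonic : L.Monic) (hdeg : L.natDegree = n)
    (ν : ℝ) (hν : 0 < ν)
    (hS1 : ∀ a ∈ L.roots, ∀ m : Fin s → ℕ, m ≠ 0 →
      ‖Λ * ∏ i, q i ^ m i - a‖ > (2 : ℝ) ^ (-ν) * ((∑ i, m i : ℕ) : ℝ) ^ (-ν))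
    (hS2 : ∀ a ∈ L.roots, ∀ m : Fin s → ℕ, m ≠ 0 →
      ‖a * ∏ i, q i ^ (-(m i : ℤ)) - Λ‖
        > (2 : ℝ) ^ (-ν) * ((∑ i, m i : ℕ) : ℝ) ^ (-ν))
    (hE : ∀ a ∈ L.roots, ∀ m p : Fin s → ℕ, (∀ i, p i ≤ m i) → (∑ i, p i) < (∑ i, m i) →
      smax s q m * min (eps s Λ q a m) (eps s Λ q a p) <
        (2 : ℝ) ^ (ν + 1) * (((∑ i, m i : ℕ) : ℝ) - ((∑ i, p i : ℕ) : ℝ)) ^ ν ∧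
      smax s q p * min (eps s Λ q a m) (eps s Λ q a p) <
        (2 : ℝ) ^ (ν + 1) * (((∑ i, m i : ℕ) : ℝ) - ((∑ i, p i : ℕ) : ℝ)) ^ ν)
    (ε δ μ : (Fin s → ℕ) → ℝ)
    (hε : ∀ m : Fin s → ℕ, ε m = 1 / ‖Polynomial.eval (Λ * ∏ i, q i ^ m i) L‖)
    (hδ1 : ∀ m : Fin s → ℕ, (∑ i, m i) = 1 → δ m = 1)
    (hμ : ∀ m : Fin s → ℕ, 1 < ∑ i, m i →
      IsGreatest {x : ℝ | ∃ l : List (Fin s → ℕ), 2 ≤ l.length ∧ (∀ y ∈ l, y ≠ 0) ∧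
        l.sum = m ∧ (l.map fun y => smax s q y ^ n * δ y).prod = x} (μ m))
    (hδ2 : ∀ m : Fin s → ℕ, 1 < ∑ i, m i → δ m = ε m * μ m)
    (N₁ N₂ Q : ℝ) (hN₁ : N₁ = (2 : ℝ) ^ (2 * ν + 1))
    (hN₂ : N₂ = (8 : ℝ) ^ (ν * (n : ℝ)) * N₁ ^ n)
    (hQ : Q = (insert (1 : ℝ) (Finset.image (fun i => ‖q i‖ ^ n) Finset.univ)).max'
      (Finset.insert_nonempty _ _)) :
    ∀ m : Fin s → ℕ, m ≠ 0 →
      smax s q m ^ n * δ m ≤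
        ((∑ i, m i : ℕ) : ℝ) ^ (-(2 * ν * (n : ℝ))) * N₂ ^ ((∑ i, m i) - 1) * Q ^ (∑ i, m i) := by
  intro m hm
  have hδ : ∀ m, 1 < deg m → ∃ l : List (Fin s → ℕ), 2 ≤ l.length ∧ (∀ y ∈ l, y ≠ 0) ∧
      l.sum = m ∧ δ m = ε m * (l.map fun y => smax s q y ^ n * δ y).prod := fun m hm => by
    obtain ⟨l, hlen, hl0, hsum, hprod⟩ := (hμ m hm).1
    exact ⟨l, hlen, hl0, hsum, by rw [hδ2 m hm, hprod]⟩
  obtain ⟨t, ht, rfl, hwt⟩ := DecompTree.exists_isProper_weight_eq ε _ hδ1 hδ m hm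
  subst hdeg hQ
  calc smax s q t.val ^ L.natDegree * δ t.val
      ≤ ((deg t.val : ℝ) ^ (-(2 * ν)) * (2 ^ (5 * ν + 1)) ^ (deg t.val - 1)) ^ L.natDegree *
          _ ^ deg t.val := by
        rw [← hwt]
        exact DecompTree.smax_pow_mul_weight_le hmonic hε
          (fun a ha => DecompTree.prod_map_nodes_smax_mul_eps_le hq hν (hS1 a ha) (hS2 a ha)
            (hE a ha) ht)
          (zero_le_one.trans (Finset.le_max' _ _ (by simp))) (max_one_norm_pow_le_max' q _)
    _ = (deg t.val : ℝ) ^ (-(2 * ν * L.natDegree)) * N₂ ^ (deg t.val - 1) * _ ^ deg t.val := by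
        rw [hN₂, hN₁, eight_rpow_mul_mul_two_rpow_pow, mul_pow, ← pow_mul, ← pow_mul,
          mul_comm (deg t.val - 1), ← Real.rpow_mul_natCast (Nat.cast_nonneg _), neg_mul]

/-- Lemma 5 of the paper, the main Siegel-type estimate showing
that the recursively defined `δ_m` grows at most exponentially.
The recursive definition of `δ` (from `ε` and `n`) is encoded by the hypotheses
`hδ1`, `hμ`, `hδ2`: `δ_m = 1` when `|m| = 1`, and `δ_m = ε_m·μ_m` when `|m| > 1`,
where `μ_m` is the greatest value of products `s^n_{m⁽¹⁾}δ_{m⁽¹⁾}⋯s^n_{m⁽ᵏ⁾}δ_{m⁽ᵏ⁾}`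
over decompositions of `m` into `k ≥ 2` nonzero multi-indices. -/
theorem stmt10 (s : ℕ) (hs : 1 ≤ s) (Λ : ℂ) (hΛ : Λ ≠ 0) (q : Fin s → ℂ) (hq : ∀ i, q i ≠ 0)
    (L : Polynomial ℂ) (n : ℕ) (hn : 1 ≤ n) (hmonic : L.Monic) (hdeg : L.natDegree = n)
    (hL0 : Polynomial.eval 0 L ≠ 0) (ν : ℝ) (hν : 0 < ν)
    (hS1 : ∀ a ∈ L.roots, ∀ m : Fin s → ℕ, m ≠ 0 →
      ‖Λ * ∏ i, q i ^ m i - a‖ > (2 : ℝ) ^ (-ν) * ((∑ i, m i : ℕ) : ℝ) ^ (-ν))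
    (hS2 : ∀ a ∈ L.roots, ∀ m : Fin s → ℕ, m ≠ 0 →
      ‖a * ∏ i, q i ^ (-(m i : ℤ)) - Λ‖
        > (2 : ℝ) ^ (-ν) * ((∑ i, m i : ℕ) : ℝ) ^ (-ν))
    (hE : ∀ a ∈ L.roots, ∀ m p : Fin s → ℕ, (∀ i, p i ≤ m i) → (∑ i, p i) < (∑ i, m i) →
      smax s q m * min (eps s Λ q a m) (eps s Λ q a p) <
        (2 : ℝ) ^ (ν + 1) * (((∑ i, m i : ℕ) : ℝ) - ((∑ i, p i : ℕ) : ℝ)) ^ ν ∧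
      smax s q p * min (eps s Λ q a m) (eps s Λ q a p) <
        (2 : ℝ) ^ (ν + 1) * (((∑ i, m i : ℕ) : ℝ) - ((∑ i, p i : ℕ) : ℝ)) ^ ν)
    (ε δ μ : (Fin s → ℕ) → ℝ)
    (hε : ∀ m : Fin s → ℕ, ε m = 1 / ‖Polynomial.eval (Λ * ∏ i, q i ^ m i) L‖)
    (hδ1 : ∀ m : Fin s → ℕ, (∑ i, m i) = 1 → δ m = 1)
    (hμ : ∀ m : Fin s → ℕ, 1 < ∑ i, m i →
      IsGreatest {x : ℝ | ∃ l : List (Fin s → ℕ), 2 ≤ l.length ∧ (∀ y ∈ l, y ≠ 0) ∧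
        l.sum = m ∧ (l.map fun y => smax s q y ^ n * δ y).prod = x} (μ m))
    (hδ2 : ∀ m : Fin s → ℕ, 1 < ∑ i, m i → δ m = ε m * μ m)
    (N₁ N₂ Q : ℝ) (hN₁ : N₁ = (2 : ℝ) ^ (2 * ν + 1))
    (hN₂ : N₂ = (8 : ℝ) ^ (ν * (n : ℝ)) * N₁ ^ n)
    (hQ : Q = (insert (1 : ℝ) (Finset.image (fun i => ‖q i‖ ^ n) Finset.univ)).max'
      (Finset.insert_nonempty _ _)) :
    ∀ m : Fin s → ℕ, m ≠ 0 →
      smax s q m ^ n * δ m ≤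
        ((∑ i, m i : ℕ) : ℝ) ^ (-(2 * ν * (n : ℝ))) * N₂ ^ ((∑ i, m i) - 1) * Q ^ (∑ i, m i) :=
  stmt10_general s Λ q hq L n hmonic hdeg ν hν hS1 hS2 hE ε δ μ hε hδ1 hμ hδ2 N₁ N₂ Q hN₁ hN₂ hQ
end
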